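/- arXiv:1604.08573 — 2 statements merged into one kernel-verified Lean document; each statement's English description precedes it below -/
import Mathlib

section
/- For every n ≥ 1 and every strictly increasing initial vector ρ0 ∈ ℝ^n (ρ0_1 < ρ0_2 < ⋯ < ρ0_n), the map A ↦ S_A is injective on subsets of {1,…,n−1}, and the set of extreme points of the closure of the convex hull of the attainable set A(ρ0, E_P) for the path graph P_n is exactly {S_A : A ⊆ {1,…,n−1}}; in particular this diffusion polytope has exactly 2^{n−1} extreme points. -/
/-- The averaging operator `B_{ij}` : averages the populations at vertices `i` and `j`,
leaving the other components unchanged. -/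
noncomputable def avg {n : ℕ} (i j : Fin n) (ρ : Fin n → ℝ) : Fin n → ℝ :=
  fun k => if k = i ∨ k = j then (ρ i + ρ j) / 2 else ρ k

/-- The attainable set `A(ρ0, E)`: all vectors obtained from `ρ0` by applying a finite
sequence of operators `B_{ij}` with `{i,j} ∈ E` (and `i ≠ j`). -/
def attainable (n : ℕ) (E : Set (Sym2 (Fin n))) (ρ0 : Fin n → ℝ) : Set (Fin n → ℝ) :=
  {ρ | ∃ L : List (Fin n × Fin n),
    (∀ p ∈ L, p.1 ≠ p.2 ∧ s(p.1, p.2) ∈ E) ∧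
    ρ = L.foldl (fun σ p => avg p.1 p.2 σ) ρ0}

/-- The edge set of the path graph `P_n` (0-based: edges `{i, i+1}` for `i+1 < n`). -/
def pathEdges (n : ℕ) : Set (Sym2 (Fin n)) :=
  {e | ∃ i : ℕ, ∃ h : i + 1 < n, e = s(⟨i, Nat.lt_of_succ_lt h⟩, ⟨i + 1, h⟩)}

/-- Start of the block of index `j` determined by `A` (0-based: `i ∈ A` means indices
`i` and `i+1` lie in the same block): the least `a` with `[a, j) ⊆ A`. -/
def blockStart (A : Finset ℕ) (j : ℕ) : ℕ :=
  Nat.findGreatest (fun a => a ≠ 0 ∧ (a - 1) ∉ A) j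

/-- End of the block of index `j` determined by `A`: the greatest `b ≤ n - 1`
with `[j, b) ⊆ A`. -/
def blockEnd (n : ℕ) (A : Finset ℕ) (j : ℕ) : ℕ :=
  Nat.findGreatest (fun b => ∀ m ∈ Finset.Ico j b, m ∈ A) (n - 1)

/-- The point `S_A`: on each block of consecutive indices determined by `A`, its
components all equal the average of the components of `ρ0` over that block. -/
noncomputable def SA {n : ℕ} (ρ0 : Fin n → ℝ) (A : Finset ℕ) : Fin n → ℝ :=
  fun j =>
    (∑ m ∈ Finset.Icc (blockStart A (j : ℕ)) (blockEnd n A (j : ℕ)),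
        if h : m < n then ρ0 ⟨m, h⟩ else 0) /
      ((blockEnd n A (j : ℕ) - blockStart A (j : ℕ) + 1 : ℕ) : ℝ)

/-- Apply the adjacent averaging operator `B_{p,p+1}` (0-based) if it exists. -/
noncomputable def stepAt (n : ℕ) (p : ℕ) (ρ : Fin n → ℝ) : Fin n → ℝ :=
  if h : p + 1 < n then avg ⟨p, Nat.lt_of_succ_lt h⟩ ⟨p + 1, h⟩ ρ else ρ

/-!
Let `P = pathPolytope ρ0` be the polytope of vectors `x` with `x_1 ≤ ⋯ ≤ x_n` whose prefix
sums dominate those of `ρ0`, with equal total. Averaging two adjacent entries of a monotone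
vector keeps it in `P`, so the closed convex hull `K` of the attainable set lies in `P`.

Every `S_A` lies in `K`: minimise `∑ x_j²` over the compact set of points of `K` whose prefix
sums are tight at the cuts outside `A`. Averaging across an edge of `A` preserves that set and
strictly lowers `∑ x_j²` unless the two entries agree, so the minimiser is constant on the
blocks of `A`; with the tight cuts this pins it down as `S_A`.

For strictly increasing `ρ0` an adjacent equality `x_i = x_{i+1}` and a tight cut after `i`
are incompatible on `P`. So if `A` is the set of adjacent equalities of a point `x ∈ P`, every
constraint of `P` tight at `x` is also tight at `S_A`, hence `x + t (x - S_A) ∈ P` for small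
`t > 0` and `x` lies inside a segment of `P` ending at `S_A`; if `x` is extreme this forces
`x = S_A`. Conversely the constraints defining `S_A` cut `P` down to the single point `S_A`,
an extreme point. Krein–Milman now gives `K = P`.
-/
section Convex

variable {E : Type*} [AddCommGroup E] [Module ℝ E]

theorem LinearMap.apply_eq_of_mem_openSegment (ℓ : E →ₗ[ℝ] ℝ) {c : ℝ} {x y z : E}
    (hx : c ≤ ℓ x) (hy : c ≤ ℓ y) (hz : z ∈ openSegment ℝ x y) (hzc : ℓ z = c) : ℓ x = c := by
  obtain ⟨a, b, ha, hb, hab, rfl⟩ := hz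
  simp only [map_add, map_smul, smul_eq_mul] at hzc
  refine le_antisymm (not_lt.1 fun h => ?_) hx
  have hc : (a + b) * c = c := by rw [hab, one_mul]
  nlinarith [mul_le_mul_of_nonneg_left hy hb.le, mul_lt_mul_of_pos_left h ha]

theorem LinearMap.eventually_le_apply_add_smul_sub (ℓ : E →ₗ[ℝ] ℝ) {c : ℝ} {x y : E}
    (hx : c ≤ ℓ x) (hxy : ℓ x = c → ℓ y = c) :
    ∀ᶠ t in nhds (0 : ℝ), c ≤ ℓ (x + t • (x - y)) := by
  simp only [map_add, map_smul, map_sub, smul_eq_mul]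
  rcases hx.eq_or_lt with hxc | hxc
  · exact .of_forall fun t => by simp [← hxc, hxy hxc.symm]
  · have : Continuous fun t : ℝ => ℓ x + t * (ℓ x - ℓ y) := by fun_prop
    exact (this.tendsto' 0 _ (by simp)).eventually_const_lt hxc |>.mono fun _ => le_of_lt

theorem eq_of_mem_extremePoints_of_eventually_mem {P : Set E} {x y : E}
    (hx : x ∈ P.extremePoints ℝ) (hy : y ∈ P) (h : ∀ᶠ t in nhds (0 : ℝ), x + t • (x - y) ∈ P) :
    y = x := by
  obtain ⟨t, hmem, ht⟩ := ((h.filter_mono nhdsWithin_le_nhds).and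
    (self_mem_nhdsWithin (s := Set.Ioi 0))).exists
  refine hx.2 hy hmem ⟨t / (1 + t), 1 / (1 + t), by positivity, by positivity,
    by field_simp; ring, ?_⟩
  match_scalars <;> field_simp; ring

variable [TopologicalSpace E]

theorem Set.MapsTo.closure_convexHull {f : E →ₗ[ℝ] E} (hf : Continuous f) {S : Set E}
    (hS : Set.MapsTo f S S) :
    Set.MapsTo f (closure (convexHull ℝ S)) (closure (convexHull ℝ S)) := by
  refine Set.MapsTo.closure ?_ hf
  rw [Set.mapsTo_iff_image_subset, f.image_convexHull]
  exact convexHull_mono hS.image_subset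

end Convex

section PrefixSum

variable {n : ℕ}

noncomputable def prefixSum (n k : ℕ) : (Fin n → ℝ) →ₗ[ℝ] ℝ where
  toFun x := ∑ m ∈ Finset.range k, if h : m < n then x ⟨m, h⟩ else 0
  map_add' x y := by
    rw [← Finset.sum_add_distrib]
    exact Finset.sum_congr rfl fun m _ => by split_ifs <;> simp
  map_smul' c x := by
    rw [RingHom.id_apply, smul_eq_mul, Finset.mul_sum]
    exact Finset.sum_congr rfl fun m _ => by split_ifs <;> simp

@[simp] theorem prefixSum_zero (x : Fin n → ℝ) : prefixSum n 0 x = 0 := rfl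

theorem prefixSum_succ (k : ℕ) (x : Fin n → ℝ) :
    prefixSum n (k + 1) x = prefixSum n k x + if h : k < n then x ⟨k, h⟩ else 0 :=
  Finset.sum_range_succ _ k

theorem prefixSum_succ_of_lt {k : ℕ} (hk : k < n) (x : Fin n → ℝ) :
    prefixSum n (k + 1) x = prefixSum n k x + x ⟨k, hk⟩ := by
  rw [prefixSum_succ, dif_pos hk]

theorem sum_Icc_eq_prefixSum_sub {s e : ℕ} (hse : s ≤ e + 1) (x : Fin n → ℝ) :
    ∑ m ∈ Finset.Icc s e, (if h : m < n then x ⟨m, h⟩ else 0) =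
      prefixSum n (e + 1) x - prefixSum n s x := by
  rw [← Finset.Ico_add_one_right_eq_Icc, Finset.sum_Ico_eq_sub _ hse]
  rfl

end PrefixSum

section Averaging

variable {n : ℕ}

noncomputable def avgLinear (i j : Fin n) : (Fin n → ℝ) →ₗ[ℝ] (Fin n → ℝ) where
  toFun := avg i j
  map_add' x y := funext fun k => by
    simp only [avg, Pi.add_apply]; split_ifs <;> ring
  map_smul' c x := funext fun k => by
    simp only [avg, Pi.smul_apply, smul_eq_mul, RingHom.id_apply]; split_ifs <;> ring

theorem avg_comm (i j : Fin n) : avg i j = avg j i := by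
  funext x k
  simp only [avg, or_comm, add_comm]

theorem prefixSum_avg {p : ℕ} (hp : p + 1 < n) (x : Fin n → ℝ) (k : ℕ) :
    prefixSum n k (avg ⟨p, by omega⟩ ⟨p + 1, hp⟩ x) =
      prefixSum n k x + if k = p + 1 then (x ⟨p + 1, hp⟩ - x ⟨p, by omega⟩) / 2 else 0 := by
  induction k with
  | zero => simp
  | succ k ih =>
    rw [prefixSum_succ, prefixSum_succ, ih]
    by_cases hk : k < n
    · simp only [dif_pos hk, avg, Fin.ext_iff]
      rcases (by omega : k = p ∨ k = p + 1 ∨ (k ≠ p ∧ k ≠ p + 1)) with rfl | rfl | ⟨hkp, hkp'⟩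
      · simp only [true_or, if_true, if_neg (by omega : ¬k = k + 1)]; ring
      · simp only [or_true, if_true, if_neg (by omega : ¬p + 1 + 1 = p + 1)]; ring
      · simp only [hkp, hkp', or_self, if_false, if_neg (by omega : ¬k + 1 = p + 1), add_zero]
    · simp only [dif_neg hk]
      split_ifs <;> first | omega | ring

theorem sum_sq_avg {i j : Fin n} (hij : i ≠ j) (x : Fin n → ℝ) :
    ∑ m, avg i j x m ^ 2 = ∑ m, x m ^ 2 - (x i - x j) ^ 2 / 2 := by
  have hdiff : ∑ m, (avg i j x m ^ 2 - x m ^ 2) =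
      (avg i j x i ^ 2 - x i ^ 2) + (avg i j x j ^ 2 - x j ^ 2) :=
    Fintype.sum_eq_add i j hij fun m hm => by simp [avg, hm.1, hm.2]
  have hi : avg i j x i = (x i + x j) / 2 := if_pos (Or.inl rfl)
  have hj : avg i j x j = (x i + x j) / 2 := if_pos (Or.inr rfl)
  rw [Finset.sum_sub_distrib, hi, hj] at hdiff
  linarith

end Averaging

section Attainable

variable {n : ℕ} {E : Set (Sym2 (Fin n))} {ρ0 : Fin n → ℝ}

theorem avg_mem_attainable {x : Fin n → ℝ} (hx : x ∈ attainable n E ρ0) {i j : Fin n}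
    (hij : i ≠ j) (he : s(i, j) ∈ E) : avg i j x ∈ attainable n E ρ0 := by
  obtain ⟨L, hL, rfl⟩ := hx
  refine ⟨L ++ [(i, j)], fun q hq => ?_, by rw [List.foldl_append]; rfl⟩
  rcases List.mem_append.1 hq with hq | hq
  · exact hL q hq
  · obtain rfl := List.mem_singleton.1 hq
    exact ⟨hij, he⟩

theorem attainable_subset {S : Set (Fin n → ℝ)} (h0 : ρ0 ∈ S)
    (hS : ∀ i j, i ≠ j → s(i, j) ∈ E → Set.MapsTo (avg i j) S S) : attainable n E ρ0 ⊆ S := by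
  rintro x ⟨L, hL, rfl⟩
  induction L generalizing ρ0 with
  | nil => exact h0
  | cons q L ih =>
    obtain ⟨hq, hqE⟩ := hL q List.mem_cons_self
    exact ih (hS _ _ hq hqE h0) fun p hp => hL p (List.mem_cons_of_mem q hp)

theorem avg_mem_closure_convexHull_attainable {x : Fin n → ℝ}
    (hx : x ∈ closure (convexHull ℝ (attainable n E ρ0))) {i j : Fin n} (hij : i ≠ j)
    (he : s(i, j) ∈ E) : avg i j x ∈ closure (convexHull ℝ (attainable n E ρ0)) :=
  Set.MapsTo.closure_convexHull (f := avgLinear i j)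
    (avgLinear i j).continuous_of_finiteDimensional (fun _ hy => avg_mem_attainable hy hij he) hx

theorem exists_avg_eq_of_mem_pathEdges {i j : Fin n} (h : s(i, j) ∈ pathEdges n) :
    ∃ p, ∃ hp : p + 1 < n, avg i j = avg ⟨p, by omega⟩ ⟨p + 1, hp⟩ := by
  obtain ⟨p, hp, he⟩ := h
  refine ⟨p, hp, ?_⟩
  rcases Sym2.eq_iff.1 he with ⟨rfl, rfl⟩ | ⟨rfl, rfl⟩
  · rfl
  · exact avg_comm _ _

end Attainable

theorem monotone_of_forall_le_succ {α : Type*} [Preorder α] {n : ℕ} {x : Fin n → α}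
    (h : ∀ i (hi : i + 1 < n), x ⟨i, by omega⟩ ≤ x ⟨i + 1, hi⟩) : Monotone x := by
  cases n with
  | zero => exact fun a => a.elim0
  | succ m => exact Fin.monotone_iff_le_succ.2 fun i => h i (by omega)

section Polytope

variable {n : ℕ} {ρ0 : Fin n → ℝ}

def pathPolytope (ρ0 : Fin n → ℝ) : Set (Fin n → ℝ) :=
  {x | (∀ i (h : i + 1 < n), x ⟨i, by omega⟩ ≤ x ⟨i + 1, h⟩) ∧
    (∀ k ≤ n, prefixSum n k ρ0 ≤ prefixSum n k x) ∧ prefixSum n n x = prefixSum n n ρ0}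

noncomputable def edgeGap {i : ℕ} (hi : i + 1 < n) : (Fin n → ℝ) →ₗ[ℝ] ℝ :=
  LinearMap.proj ⟨i + 1, hi⟩ - LinearMap.proj ⟨i, by omega⟩

@[simp] theorem edgeGap_apply {i : ℕ} (hi : i + 1 < n) (x : Fin n → ℝ) :
    edgeGap hi x = x ⟨i + 1, hi⟩ - x ⟨i, by omega⟩ := rfl

theorem isClosed_pathPolytope (ρ0 : Fin n → ℝ) : IsClosed (pathPolytope ρ0) := by
  have hcont (k : ℕ) : Continuous (prefixSum n k) := LinearMap.continuous_of_finiteDimensional _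
  simp only [pathPolytope, Set.ofPred_and, Set.ofPred_forall]
  exact (isClosed_iInter fun i => isClosed_iInter fun h =>
      isClosed_le (continuous_apply (⟨i, by omega⟩ : Fin n))
        (continuous_apply (⟨i + 1, h⟩ : Fin n))).inter
    ((isClosed_iInter fun k => isClosed_iInter fun _ =>
        isClosed_le continuous_const (hcont k)).inter (isClosed_eq (hcont n) continuous_const))

theorem convex_pathPolytope (ρ0 : Fin n → ℝ) : Convex ℝ (pathPolytope ρ0) := by
  rintro x ⟨hx₁, hx₂, hx₃⟩ y ⟨hy₁, hy₂, hy₃⟩ a b ha hb hab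
  simp only [pathPolytope, Set.mem_ofPred_eq, map_add, map_smul, Pi.add_apply, Pi.smul_apply,
    smul_eq_mul]
  refine ⟨fun i h => ?_, fun k hk => ?_, ?_⟩
  · nlinarith [hx₁ i h, hy₁ i h]
  · have h := add_le_add (mul_le_mul_of_nonneg_left (hx₂ k hk) ha)
      (mul_le_mul_of_nonneg_left (hy₂ k hk) hb)
    rwa [← add_mul, hab, one_mul] at h
  · rw [hx₃, hy₃, ← add_mul, hab, one_mul]

theorem mem_pathPolytope_bounds {x : Fin n → ℝ} (hx : x ∈ pathPolytope ρ0) (j : Fin n) :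
    ρ0 ⟨0, j.pos⟩ ≤ x j ∧ x j ≤ ρ0 ⟨n - 1, by have := j.2; omega⟩ := by
  obtain ⟨hx₁, hx₂, hx₃⟩ := hx
  have hn := j.pos
  have hmono := monotone_of_forall_le_succ hx₁
  have hfirst := hx₂ 1 hn
  have hlast := hx₂ (n - 1) (by omega)
  have htotal (y : Fin n → ℝ) : prefixSum n n y = prefixSum n (n - 1) y + y ⟨n - 1, by omega⟩ := by
    rw [← prefixSum_succ_of_lt, Nat.sub_add_cancel hn]
  rw [prefixSum_succ_of_lt hn, prefixSum_succ_of_lt hn] at hfirst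
  rw [htotal, htotal] at hx₃
  simp only [prefixSum_zero, zero_add] at hfirst
  constructor
  · exact hfirst.trans (hmono (Fin.mk_le_mk.2 (Nat.zero_le _)))
  · exact (hmono (show j ≤ ⟨n - 1, by omega⟩ from Fin.mk_le_mk.2 (by omega))).trans (by linarith)

theorem isCompact_pathPolytope (ρ0 : Fin n → ℝ) : IsCompact (pathPolytope ρ0) :=
  (isCompact_univ_pi fun _ => isCompact_Icc).of_isClosed_subset
    (isClosed_pathPolytope ρ0) fun _ hx j _ => mem_pathPolytope_bounds hx j

theorem avg_mem_pathPolytope {x : Fin n → ℝ} (hx : x ∈ pathPolytope ρ0) {p : ℕ}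
    (hp : p + 1 < n) : avg ⟨p, by omega⟩ ⟨p + 1, hp⟩ x ∈ pathPolytope ρ0 := by
  obtain ⟨hx₁, hx₂, hx₃⟩ := hx
  have hle (a b : Fin n) (hab : (a : ℕ) ≤ b) : x a ≤ x b := monotone_of_forall_le_succ hx₁ hab
  refine ⟨fun i hi => ?_, fun k hk => ?_, ?_⟩
  · have hpp := hle ⟨p, by omega⟩ ⟨p + 1, hp⟩ (by simp)
    simp only [avg, Fin.ext_iff]
    split_ifs
    · exact le_rfl
    · linarith [hle ⟨p + 1, hp⟩ ⟨i + 1, hi⟩ (by simp; omega)]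
    · linarith [hle ⟨i, by omega⟩ ⟨p, by omega⟩ (by simp; omega)]
    · exact hx₁ i hi
  · rw [prefixSum_avg]
    have := hle ⟨p, by omega⟩ ⟨p + 1, hp⟩ (by simp)
    split_ifs <;> linarith [hx₂ k hk]
  · rw [prefixSum_avg, if_neg (by omega), add_zero, hx₃]

theorem mem_pathPolytope_self (hρ0 : Monotone ρ0) : ρ0 ∈ pathPolytope ρ0 :=
  ⟨fun _ _ => hρ0 (Fin.mk_le_mk.2 (Nat.le_succ _)), fun _ _ => le_rfl, rfl⟩

theorem closure_convexHull_attainable_subset (hρ0 : Monotone ρ0) :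
    closure (convexHull ℝ (attainable n (pathEdges n) ρ0)) ⊆ pathPolytope ρ0 := by
  refine closure_minimal (convexHull_min ?_ (convex_pathPolytope ρ0)) (isClosed_pathPolytope ρ0)
  refine attainable_subset (mem_pathPolytope_self hρ0) fun i j _ he x hx => ?_
  obtain ⟨p, hp, h⟩ := exists_avg_eq_of_mem_pathEdges he
  rw [h]
  exact avg_mem_pathPolytope hx hp

theorem prefixSum_ne_of_apply_eq (hρ0 : StrictMono ρ0) {x : Fin n → ℝ}
    (hx : x ∈ pathPolytope ρ0) {i : ℕ} (hi : i + 1 < n) (heq : x ⟨i, by omega⟩ = x ⟨i + 1, hi⟩) :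
    prefixSum n (i + 1) x ≠ prefixSum n (i + 1) ρ0 := by
  intro htight
  have hρ : ρ0 ⟨i, by omega⟩ < ρ0 ⟨i + 1, hi⟩ := hρ0 (Fin.mk_lt_mk.2 (Nat.lt_succ_self i))
  have hi' := hx.2.1 i (by omega)
  have hi₂ := hx.2.1 (i + 2) hi
  rw [prefixSum_succ_of_lt (by omega), prefixSum_succ_of_lt (by omega)] at htight
  rw [prefixSum_succ_of_lt hi, prefixSum_succ_of_lt hi, prefixSum_succ_of_lt (by omega),
    prefixSum_succ_of_lt (by omega)] at hi₂
  linarith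

end Polytope

section Blocks

variable {n : ℕ} {A : Finset ℕ} {j m : ℕ}

theorem blockStart_le (A : Finset ℕ) (j : ℕ) : blockStart A j ≤ j := Nat.findGreatest_le j

theorem mem_of_blockStart_le_of_lt (h₁ : blockStart A j ≤ m) (h₂ : m < j) : m ∈ A := by
  by_contra hm
  have : m + 1 ≤ blockStart A j :=
    Nat.le_findGreatest (P := fun a => a ≠ 0 ∧ a - 1 ∉ A) h₂ ⟨by omega, by simpa using hm⟩
  omega

theorem blockStart_sub_one_notMem (h : blockStart A j ≠ 0) : blockStart A j - 1 ∉ A :=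
  (Nat.findGreatest_of_ne_zero rfl h).2

theorem blockEnd_le (n : ℕ) (A : Finset ℕ) (j : ℕ) : blockEnd n A j ≤ n - 1 :=
  Nat.findGreatest_le _

theorem le_blockEnd (hj : j ≤ n - 1) : j ≤ blockEnd n A j :=
  Nat.le_findGreatest hj (by simp)

theorem mem_of_le_of_lt_blockEnd (h₁ : j ≤ m) (h₂ : m < blockEnd n A j) : m ∈ A :=
  Nat.findGreatest_of_ne_zero (P := fun b => ∀ m ∈ Finset.Ico j b, m ∈ A) (n := n - 1) rfl
    (by unfold blockEnd at h₂; omega) m (Finset.mem_Ico.2 ⟨h₁, h₂⟩)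

theorem blockEnd_notMem (hA : n - 1 ∉ A) : blockEnd n A j ∉ A := by
  intro he
  rcases (blockEnd_le n A j).eq_or_lt with h | h
  · exact hA (h ▸ he)
  · have : blockEnd n A j + 1 ≤ blockEnd n A j := by
      refine Nat.le_findGreatest (P := fun b => ∀ m ∈ Finset.Ico j b, m ∈ A) h fun m hm => ?_
      obtain ⟨hjm, hm⟩ := Finset.mem_Ico.1 hm
      rcases Nat.lt_succ_iff_lt_or_eq.1 hm with hm | rfl
      · exact mem_of_le_of_lt_blockEnd hjm hm
      · exact he
    omega

end Blocks

section BlockFace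

variable {n : ℕ} {ρ0 : Fin n → ℝ} {A : Finset ℕ}

def blockFace (ρ0 : Fin n → ℝ) (A : Finset ℕ) : Set (Fin n → ℝ) :=
  {x | (∀ i (h : i + 1 < n), i ∈ A → x ⟨i, by omega⟩ = x ⟨i + 1, h⟩) ∧
    ∀ i < n, i ∉ A → prefixSum n (i + 1) x = prefixSum n (i + 1) ρ0}

theorem apply_eq_of_mem_blockFace {x : Fin n → ℝ} (hx : x ∈ blockFace ρ0 A) (j : Fin n) {m : ℕ}
    (h₁ : blockStart A j ≤ m) (h₂ : m ≤ blockEnd n A j) (hm : m < n) : x ⟨m, hm⟩ = x j := by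
  have hs : blockStart A j < n := (blockStart_le A j).trans_lt j.2
  have key (m : ℕ) (h₁ : blockStart A j ≤ m) :
      m ≤ blockEnd n A j → ∀ hm : m < n, x ⟨m, hm⟩ = x ⟨blockStart A j, hs⟩ := by
    induction m, h₁ using Nat.le_induction with
    | base => exact fun _ _ => rfl
    | succ m hsm ih =>
      intro hme hm
      have hmA : m ∈ A := by
        rcases lt_or_ge m j with hmj | hmj
        · exact mem_of_blockStart_le_of_lt hsm hmj
        · exact mem_of_le_of_lt_blockEnd (n := n) hmj (by omega)
      rw [← hx.1 m hm hmA]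
      exact ih (by omega) (by omega)
  rw [key m h₁ h₂ hm, ← key j (blockStart_le A j) (le_blockEnd (by omega)) j.2]

theorem prefixSum_blockStart_eq {x : Fin n → ℝ} (hx : x ∈ blockFace ρ0 A) (j : Fin n) :
    prefixSum n (blockStart A j) x = prefixSum n (blockStart A j) ρ0 := by
  rcases eq_or_ne (blockStart A j) 0 with h | h
  · simp [h]
  · have := hx.2 (blockStart A j - 1) (by have := blockStart_le A j; have := j.2; omega)
      (blockStart_sub_one_notMem h)
    rwa [Nat.sub_add_cancel (Nat.one_le_iff_ne_zero.2 h)] at this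

theorem prefixSum_blockEnd_succ_eq (hA : n - 1 ∉ A) {x : Fin n → ℝ} (hx : x ∈ blockFace ρ0 A)
    (j : Fin n) : prefixSum n (blockEnd n A j + 1) x = prefixSum n (blockEnd n A j + 1) ρ0 :=
  hx.2 _ (by have := blockEnd_le n A j; have := j.2; omega) (blockEnd_notMem hA)

theorem eq_SA_of_mem_blockFace (hA : n - 1 ∉ A) {x : Fin n → ℝ} (hx : x ∈ blockFace ρ0 A) :
    x = SA ρ0 A := by
  funext j
  have hs := blockStart_le A j
  have he : (j : ℕ) ≤ blockEnd n A j := le_blockEnd (by omega)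
  have hen := blockEnd_le n A j
  have hconst : ∑ m ∈ Finset.Icc (blockStart A j) (blockEnd n A j),
      (if h : m < n then x ⟨m, h⟩ else 0) =
      ((blockEnd n A j - blockStart A j + 1 : ℕ) : ℝ) * x j := by
    rw [Finset.sum_congr rfl fun m hm => ?_, Finset.sum_const, Nat.card_Icc, nsmul_eq_mul,
      Nat.sub_add_comm (by omega)]
    obtain ⟨hm₁, hm₂⟩ := Finset.mem_Icc.1 hm
    rw [dif_pos (by omega), apply_eq_of_mem_blockFace hx j hm₁ hm₂]
  have hblock := sum_Icc_eq_prefixSum_sub (n := n) (by omega : blockStart A j ≤ blockEnd n A j + 1)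
  rw [SA, hblock ρ0, ← prefixSum_blockStart_eq hx, ← prefixSum_blockEnd_succ_eq hA hx,
    ← hblock x, hconst, mul_div_cancel_left₀ _ (by positivity)]

end BlockFace

section Extreme

variable {n : ℕ} {ρ0 : Fin n → ℝ} {A : Finset ℕ}

theorem exists_mem_closure_convexHull_attainable_blockFace (hρ0 : Monotone ρ0) (A : Finset ℕ) :
    ∃ z ∈ closure (convexHull ℝ (attainable n (pathEdges n) ρ0)), z ∈ blockFace ρ0 A := by
  set K := closure (convexHull ℝ (attainable n (pathEdges n) ρ0))
  set T := {x : Fin n → ℝ | ∀ i < n, i ∉ A → prefixSum n (i + 1) x = prefixSum n (i + 1) ρ0}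
  have hT : IsClosed T := by
    simp only [T, Set.ofPred_forall]
    exact isClosed_iInter fun i => isClosed_iInter fun _ => isClosed_iInter fun _ =>
      isClosed_eq (LinearMap.continuous_of_finiteDimensional _) continuous_const
  have hC : IsCompact (K ∩ T) := (isCompact_pathPolytope ρ0).of_isClosed_subset
    (isClosed_closure.inter hT)
    (Set.inter_subset_left.trans (closure_convexHull_attainable_subset hρ0))
  have hρ0K : ρ0 ∈ K ∩ T :=
    ⟨subset_closure (subset_convexHull ℝ _ ⟨[], by simp, rfl⟩), fun _ _ _ => rfl⟩
  obtain ⟨z, ⟨hzK, hzT⟩, hzmin⟩ := hC.exists_isMinOn (f := fun x : Fin n → ℝ => ∑ j, x j ^ 2)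
    ⟨ρ0, hρ0K⟩ (by fun_prop)
  refine ⟨z, hzK, fun p hp hpA => ?_, hzT⟩
  have hne : (⟨p, by omega⟩ : Fin n) ≠ ⟨p + 1, hp⟩ := by simp
  have havg : avg ⟨p, by omega⟩ ⟨p + 1, hp⟩ z ∈ K ∩ T := by
    refine ⟨avg_mem_closure_convexHull_attainable hzK hne ⟨p, hp, rfl⟩, fun i hi hiA => ?_⟩
    rw [prefixSum_avg, if_neg fun h => hiA (by rwa [Nat.add_right_cancel h]), add_zero,
      hzT i hi hiA]
  have hmin : ∑ j, z j ^ 2 ≤ ∑ j, avg _ _ z j ^ 2 := hzmin havg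
  rw [sum_sq_avg hne] at hmin
  have hsq : (z ⟨p, by omega⟩ - z ⟨p + 1, hp⟩) ^ 2 = 0 := le_antisymm (by linarith) (sq_nonneg _)
  exact sub_eq_zero.1 (pow_eq_zero_iff two_ne_zero |>.1 hsq)

theorem SA_mem_closure_convexHull_attainable (hρ0 : Monotone ρ0) (hA : n - 1 ∉ A) :
    SA ρ0 A ∈ closure (convexHull ℝ (attainable n (pathEdges n) ρ0)) := by
  obtain ⟨z, hzK, hz⟩ := exists_mem_closure_convexHull_attainable_blockFace hρ0 A
  rwa [← eq_SA_of_mem_blockFace hA hz]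

theorem SA_mem_blockFace (hρ0 : Monotone ρ0) (hA : n - 1 ∉ A) : SA ρ0 A ∈ blockFace ρ0 A := by
  obtain ⟨z, -, hz⟩ := exists_mem_closure_convexHull_attainable_blockFace hρ0 A
  rwa [← eq_SA_of_mem_blockFace hA hz]

theorem SA_mem_pathPolytope (hρ0 : Monotone ρ0) (hA : n - 1 ∉ A) : SA ρ0 A ∈ pathPolytope ρ0 :=
  closure_convexHull_attainable_subset hρ0 (SA_mem_closure_convexHull_attainable hρ0 hA)

theorem SA_mem_extremePoints (hρ0 : Monotone ρ0) (hA : n - 1 ∉ A) :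
    SA ρ0 A ∈ (pathPolytope ρ0).extremePoints ℝ := by
  have hface := SA_mem_blockFace hρ0 hA
  refine ⟨SA_mem_pathPolytope hρ0 hA, fun w hw w' hw' hseg =>
    eq_SA_of_mem_blockFace hA ⟨fun i hi hiA => ?_, fun i hi hiA => ?_⟩⟩
  · have h := (edgeGap hi).apply_eq_of_mem_openSegment (c := 0) (by simpa using hw.1 i hi)
      (by simpa using hw'.1 i hi) hseg (by simp [hface.1 i hi hiA])
    exact (sub_eq_zero.1 h).symm
  · exact (prefixSum n (i + 1)).apply_eq_of_mem_openSegment (hw.2.1 _ hi) (hw'.2.1 _ hi) hseg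
      (hface.2 i hi hiA)

theorem exists_eq_SA_of_mem_extremePoints (hρ0 : StrictMono ρ0) {x : Fin n → ℝ}
    (hx : x ∈ (pathPolytope ρ0).extremePoints ℝ) :
    ∃ A ⊆ Finset.range (n - 1), x = SA ρ0 A := by
  classical
  set A := (Finset.range (n - 1)).filter fun i => ∃ h : i + 1 < n, x ⟨i, by omega⟩ = x ⟨i + 1, h⟩
  have hA : n - 1 ∉ A := by simp [A]
  have hface := SA_mem_blockFace hρ0.monotone hA
  have hS := SA_mem_pathPolytope hρ0.monotone hA
  refine ⟨A, Finset.filter_subset _ _, (eq_of_mem_extremePoints_of_eventually_mem hx hS ?_).symm⟩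
  obtain ⟨hx₁, hx₂, hx₃⟩ := hx.1
  have hedge (i : ℕ) (hi : i + 1 < n) : ∀ᶠ t in nhds (0 : ℝ),
      (x + t • (x - SA ρ0 A)) ⟨i, by omega⟩ ≤ (x + t • (x - SA ρ0 A)) ⟨i + 1, hi⟩ := by
    refine ((edgeGap hi).eventually_le_apply_add_smul_sub (c := 0) (by simpa using hx₁ i hi)
      fun h => ?_).mono fun t ht => by simpa using ht
    have hiA : i ∈ A :=
      Finset.mem_filter.2 ⟨Finset.mem_range.2 (by omega), hi, (sub_eq_zero.1 h).symm⟩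
    simp [hface.1 i hi hiA]
  have hcut (k : ℕ) (hk : k ≤ n) : ∀ᶠ t in nhds (0 : ℝ),
      prefixSum n k ρ0 ≤ prefixSum n k (x + t • (x - SA ρ0 A)) := by
    refine (prefixSum n k).eventually_le_apply_add_smul_sub (hx₂ k hk) fun htight => ?_
    obtain rfl | ⟨i, rfl⟩ : k = 0 ∨ ∃ i, k = i + 1 := by rcases k with _ | i <;> simp
    · simp
    · refine hface.2 i (by omega) fun hiA => ?_
      obtain ⟨-, hi, heq⟩ := Finset.mem_filter.1 hiA
      exact prefixSum_ne_of_apply_eq hρ0 hx.1 hi heq htight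
  have hedges := (Set.finite_lt_nat n).eventually_all.2 fun i _ => Filter.eventually_all.2 (hedge i)
  have hcuts := (Set.finite_le_nat n).eventually_all.2 hcut
  filter_upwards [hedges, hcuts] with t ht₁ ht₂
  refine ⟨fun i hi => ht₁ i (show i < n by omega) hi, ht₂, ?_⟩
  rw [map_add, map_smul, map_sub, hx₃, hS.2.2, sub_self, smul_zero, add_zero]

theorem closure_convexHull_attainable_eq (hρ0 : StrictMono ρ0) :
    closure (convexHull ℝ (attainable n (pathEdges n) ρ0)) = pathPolytope ρ0 := by
  refine (closure_convexHull_attainable_subset hρ0.monotone).antisymm ?_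
  rw [← closure_convexHull_extremePoints (isCompact_pathPolytope ρ0) (convex_pathPolytope ρ0)]
  refine closure_minimal (convexHull_min (fun x hx => ?_) (convex_convexHull ℝ _).closure)
    isClosed_closure
  obtain ⟨A, hA, rfl⟩ := exists_eq_SA_of_mem_extremePoints hρ0 hx
  exact SA_mem_closure_convexHull_attainable hρ0.monotone
    fun h => Finset.notMem_range_self (hA h)

theorem subset_of_SA_eq (hρ0 : StrictMono ρ0) {B : Finset ℕ} (hA : A ⊆ Finset.range (n - 1))
    (hB : n - 1 ∉ B) (h : SA ρ0 A = SA ρ0 B) : A ⊆ B := by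
  intro i hiA
  have hi : i + 1 < n := by have := Finset.mem_range.1 (hA hiA); omega
  by_contra hiB
  have hfaceA := SA_mem_blockFace hρ0.monotone fun h => Finset.notMem_range_self (hA h)
  have hfaceB := SA_mem_blockFace hρ0.monotone hB
  exact prefixSum_ne_of_apply_eq hρ0 (SA_mem_pathPolytope hρ0.monotone hB) hi
    (h ▸ hfaceA.1 i hi hiA) (hfaceB.2 i (by omega) hiB)

theorem SA_injOn (hρ0 : StrictMono ρ0) :
    Set.InjOn (SA ρ0) {A : Finset ℕ | A ⊆ Finset.range (n - 1)} := fun _ hA _ hB h =>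
  (subset_of_SA_eq hρ0 hA (fun h => Finset.notMem_range_self (hB h)) h).antisymm
    (subset_of_SA_eq hρ0 hB (fun h => Finset.notMem_range_self (hA h)) h.symm)

theorem ncard_setOf_SA (hρ0 : StrictMono ρ0) :
    {σ | ∃ A ⊆ Finset.range (n - 1), σ = SA ρ0 A}.ncard = 2 ^ (n - 1) := by
  have himage : {σ | ∃ A ⊆ Finset.range (n - 1), σ = SA ρ0 A} =
      SA ρ0 '' {A : Finset ℕ | A ⊆ Finset.range (n - 1)} :=
    Set.ext fun _ => ⟨fun ⟨A, hA, h⟩ => ⟨A, hA, h.symm⟩, fun ⟨A, hA, h⟩ => ⟨A, hA, h.symm⟩⟩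
  have hpowerset : {A : Finset ℕ | A ⊆ Finset.range (n - 1)} = ↑(Finset.range (n - 1)).powerset :=
    Set.ext fun _ => Finset.mem_powerset.symm
  rw [himage, (SA_injOn hρ0).ncard_image, hpowerset, Set.ncard_coe_finset, Finset.card_powerset,
    Finset.card_range]

end Extreme

theorem extremePoints_path_polytope_general (n : ℕ)
    (ρ0 : Fin n → ℝ) (hρ0 : StrictMono ρ0) :
    Set.InjOn (SA ρ0) {A : Finset ℕ | A ⊆ Finset.range (n - 1)} ∧
    Set.extremePoints ℝ (closure (convexHull ℝ (attainable n (pathEdges n) ρ0))) =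
      {σ | ∃ A ⊆ Finset.range (n - 1), σ = SA ρ0 A} ∧
    {σ | ∃ A ⊆ Finset.range (n - 1), σ = SA ρ0 A}.ncard = 2 ^ (n - 1) := by
  refine ⟨SA_injOn hρ0, ?_, ncard_setOf_SA hρ0⟩
  rw [closure_convexHull_attainable_eq hρ0]
  refine Set.Subset.antisymm (fun x hx => exists_eq_SA_of_mem_extremePoints hρ0 hx) ?_
  rintro _ ⟨A, hA, rfl⟩
  exact SA_mem_extremePoints hρ0.monotone fun h => Finset.notMem_range_self (hA h)

/-- For strictly increasing `ρ0`, the map `A ↦ S_A` is injective on subsets of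
`{1, …, n-1}`, the extreme points of the diffusion polytope of `P_n` are exactly the
points `S_A`, and there are exactly `2^(n-1)` of them. -/
theorem extremePoints_path_polytope (n : ℕ) (hn : 1 ≤ n)
    (ρ0 : Fin n → ℝ) (hρ0 : StrictMono ρ0) :
    Set.InjOn (SA ρ0) {A : Finset ℕ | A ⊆ Finset.range (n - 1)} ∧
    Set.extremePoints ℝ (closure (convexHull ℝ (attainable n (pathEdges n) ρ0))) =
      {σ | ∃ A ⊆ Finset.range (n - 1), σ = SA ρ0 A} ∧
    {σ | ∃ A ⊆ Finset.range (n - 1), σ = SA ρ0 A}.ncard = 2 ^ (n - 1) :=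
  extremePoints_path_polytope_general n ρ0 hρ0
end

section
/- Let a ≤ b ≤ c be real numbers with a < c and a + c ≤ 2b, let m = (a+b+c)/3, and set λ1 = 3(c−b)/(b+c−2a). Then 0 ≤ λ1 ≤ 1 and the following identity of triples holds: ((a+c)/2, b, (a+c)/2) = λ1·(m, m, m) + (1−λ1)·((2a+b+c)/4, (b+c)/2, (2a+b+c)/4). Equivalently, for ρ = (a,b,c) ∈ ℝ^3, B_{13}(ρ) = λ1·(m,m,m) + (1−λ1)·B_{13}(B_{23}(ρ)). -/
theorem avg_apply_left {n : ℕ} (i j : Fin n) (ρ : Fin n → ℝ) :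
    avg i j ρ i = (ρ i + ρ j) / 2 :=
  if_pos (Or.inl rfl)

theorem avg_apply_right {n : ℕ} (i j : Fin n) (ρ : Fin n → ℝ) :
    avg i j ρ j = (ρ i + ρ j) / 2 :=
  if_pos (Or.inr rfl)

theorem avg_apply_of_ne {n : ℕ} {i j k : Fin n} (hi : k ≠ i) (hj : k ≠ j) (ρ : Fin n → ℝ) :
    avg i j ρ k = ρ k :=
  if_neg (not_or.2 ⟨hi, hj⟩)

theorem avg_zero_two_fin_three (a b c : ℝ) :
    avg (0 : Fin 3) 2 ![a, b, c] = ![(a + c) / 2, b, (a + c) / 2] := by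
  ext k
  fin_cases k
  · exact avg_apply_left _ _ _
  · exact avg_apply_of_ne (by decide) (by decide) _
  · exact avg_apply_right _ _ _

theorem avg_one_two_fin_three (a b c : ℝ) :
    avg (1 : Fin 3) 2 ![a, b, c] = ![a, (b + c) / 2, (b + c) / 2] := by
  ext k
  fin_cases k
  · exact avg_apply_of_ne (by decide) (by decide) _
  · exact avg_apply_left _ _ _
  · exact avg_apply_right _ _ _

theorem avg_zero_two_avg_one_two_fin_three (a b c : ℝ) :
    avg (0 : Fin 3) 2 (avg 1 2 ![a, b, c]) =
      ![(2 * a + b + c) / 4, (b + c) / 2, (2 * a + b + c) / 4] := by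
  rw [avg_one_two_fin_three, avg_zero_two_fin_three]
  exact Matrix.vec3_eq (by ring) rfl (by ring)

theorem eq_smul_average_add_smul {a b c w : ℝ} (hw : w * (b + c - 2 * a) = 3 * (c - b)) :
    (![(a + c) / 2, b, (a + c) / 2] : Fin 3 → ℝ) =
      w • (![(a + b + c) / 3, (a + b + c) / 3, (a + b + c) / 3] : Fin 3 → ℝ) +
      (1 - w) • (![(2 * a + b + c) / 4, (b + c) / 2, (2 * a + b + c) / 4] : Fin 3 → ℝ) := by
  rw [Matrix.smul_vec3, Matrix.smul_vec3, Matrix.vec3_add]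
  refine Matrix.vec3_eq ?_ ?_ ?_
  · linear_combination (-1 / 12 : ℝ) * hw
  · linear_combination (1 / 6 : ℝ) * hw
  · linear_combination (-1 / 12 : ℝ) * hw

theorem convex_identity_one_general (a b c : ℝ) (hbc : b ≤ c) (hac : a < c)
    (h : a + c ≤ 2 * b) :
    0 ≤ 3 * (c - b) / (b + c - 2 * a) ∧
    3 * (c - b) / (b + c - 2 * a) ≤ 1 ∧
    (![(a + c) / 2, b, (a + c) / 2] : Fin 3 → ℝ) =
      (3 * (c - b) / (b + c - 2 * a)) •
        (![(a + b + c) / 3, (a + b + c) / 3, (a + b + c) / 3] : Fin 3 → ℝ) +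
      (1 - 3 * (c - b) / (b + c - 2 * a)) •
        (![(2 * a + b + c) / 4, (b + c) / 2, (2 * a + b + c) / 4] : Fin 3 → ℝ) ∧
    avg (0 : Fin 3) 2 ![a, b, c] =
      (3 * (c - b) / (b + c - 2 * a)) •
        (![(a + b + c) / 3, (a + b + c) / 3, (a + b + c) / 3] : Fin 3 → ℝ) +
      (1 - 3 * (c - b) / (b + c - 2 * a)) •
        avg (0 : Fin 3) 2 (avg (1 : Fin 3) 2 ![a, b, c]) := by
  have hd : 0 < b + c - 2 * a := by linarith
  have hcomb := eq_smul_average_add_smul (div_mul_cancel₀ (3 * (c - b)) hd.ne')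
  refine ⟨div_nonneg (by linarith) hd.le, (div_le_one hd).2 (by linarith), hcomb, ?_⟩
  rw [avg_zero_two_fin_three, avg_zero_two_avg_one_two_fin_three]
  exact hcomb

/-- First convexity identity: for `a ≤ b ≤ c` with `a < c` and `a + c ≤ 2b`, with
`λ1 = 3(c−b)/(b+c−2a)` one has `0 ≤ λ1 ≤ 1` and `B_{13}(ρ)` is the convex combination
`λ1·(m,m,m) + (1−λ1)·B_{13}(B_{23}(ρ))` for `ρ = (a,b,c)`, `m = (a+b+c)/3`. -/
theorem convex_identity_one (a b c : ℝ) (hab : a ≤ b) (hbc : b ≤ c) (hac : a < c)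
    (h : a + c ≤ 2 * b) :
    0 ≤ 3 * (c - b) / (b + c - 2 * a) ∧
    3 * (c - b) / (b + c - 2 * a) ≤ 1 ∧
    (![(a + c) / 2, b, (a + c) / 2] : Fin 3 → ℝ) =
      (3 * (c - b) / (b + c - 2 * a)) •
        (![(a + b + c) / 3, (a + b + c) / 3, (a + b + c) / 3] : Fin 3 → ℝ) +
      (1 - 3 * (c - b) / (b + c - 2 * a)) •
        (![(2 * a + b + c) / 4, (b + c) / 2, (2 * a + b + c) / 4] : Fin 3 → ℝ) ∧
    avg (0 : Fin 3) 2 ![a, b, c] =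
      (3 * (c - b) / (b + c - 2 * a)) •
        (![(a + b + c) / 3, (a + b + c) / 3, (a + b + c) / 3] : Fin 3 → ℝ) +
      (1 - 3 * (c - b) / (b + c - 2 * a)) •
        avg (0 : Fin 3) 2 (avg (1 : Fin 3) 2 ![a, b, c]) :=
  convex_identity_one_general a b c hbc hac h
end
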